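/- Let φ : ℕ → Bool be a function that is not computable. Fix n ≥ 1 and m ≥ 1, let B : Fin m → ((Fin n → Bool) → (Fin n → Bool)) be a family of bijective Boolean functions, and let h : ℕ → Fin m be a computable function. Define g : ℕ → Bool blockwise by requiring that for every j : ℕ, the n-tuple (g(j·n), g(j·n + 1), …, g(j·n + (n-1))) equals B (h j) applied to the n-tuple (φ(j·n), φ(j·n + 1), …, φ(j·n + (n-1))); that is, for all j : ℕ and i : Fin n, g(j·n + i) = B (h j) (fun i' => φ(j·n + i')) i. Then g is not computable. -/

import Mathlib

/-!
Cut ℕ into consecutive blocks of length `n`. A sequence is computable exactly when its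
sequence of blocks is, since a position `k` lies in block `k / n` at offset `k % n`. The
blocks of `φ` are recovered from those of `g` by inverting `B (h j)`; as a map on the finite
set `Fin m × (Fin n → Bool)` this inversion is computable, so `g` computable would make `φ`
computable.
-/

theorem Computable.of_fin_apply {α σ : Type*} [Primcodable α] [Primcodable σ] {n : ℕ}
    {f : α → Fin n → σ} (hf : ∀ i, Computable fun a => f a i) : Computable f :=
  (Primrec.vector_get'.to_comp.comp (Computable.vector_ofFn hf)).of_eq fun a => by
    funext i; simp

def block {α : Type*} (n : ℕ) (f : ℕ → α) (j : ℕ) : Fin n → α :=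
  fun i => f (j * n + i)

theorem block_div_mod {α : Type*} {n : ℕ} (hn : 0 < n) (f : ℕ → α) (k : ℕ) :
    block n f (k / n) ⟨k % n, Nat.mod_lt k hn⟩ = f k := by
  simp only [block, Nat.div_add_mod']

section block

variable {α : Type*} [Primcodable α] {n : ℕ} {f : ℕ → α}

theorem Computable.block (hf : Computable f) : Computable (block n f) :=
  .of_fin_apply fun i => hf.comp <|
    (Primrec.nat_add.comp (Primrec.nat_mul.comp .id (.const n)) (.const (i : ℕ))).to_comp

theorem computable_block_iff (hn : 0 < n) : Computable (block n f) ↔ Computable f := by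
  refine ⟨fun hb => ?_, Computable.block⟩
  have hoffset : Computable fun k : ℕ => (⟨k % n, Nat.mod_lt k hn⟩ : Fin n) :=
    Computable.encode_iff.1 (Primrec.nat_mod.comp .id (.const n)).to_comp
  exact (Computable.fin_app.comp (hb.comp (Primrec.nat_div.comp .id (.const n)).to_comp)
    hoffset).of_eq (block_div_mod hn f)

end block

theorem dynamic_level_set_incomputable_general
    (φ : ℕ → Bool) (hφ : ¬ Computable φ)
    (n m : ℕ) (hn : 1 ≤ n)
    (B : Fin m → ((Fin n → Bool) → (Fin n → Bool)))
    (hB : ∀ k : Fin m, Function.Bijective (B k))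
    (h : ℕ → Fin m) (hh : Computable h)
    (g : ℕ → Bool)
    (hg : ∀ (j : ℕ) (i : Fin n),
      g (j * n + i) = B (h j) (fun i' : Fin n => φ (j * n + i')) i) :
    ¬ Computable g := by
  intro hgc
  let E (k : Fin m) := Equiv.ofBijective (B k) (hB k)
  have hdecode : block n φ = fun j => (E (h j)).symm (block n g j) := by
    funext j
    rw [Equiv.eq_symm_apply]
    exact funext fun i => (hg j i).symm
  have hinv : Computable₂ fun k v => (E k).symm v := (Primrec.dom_finite _).to_comp
  refine hφ ((computable_block_iff hn).1 ?_)
  rw [hdecode]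
  exact hinv.comp hh hgc.block

/-- Lemma 4.1 (Fiske 2012): blockwise transformation of an incomputable
bit sequence by invertible Boolean functions, selected by a computable
index function, yields an incomputable sequence. -/
theorem dynamic_level_set_incomputable
    (φ : ℕ → Bool) (hφ : ¬ Computable φ)
    (n m : ℕ) (hn : 1 ≤ n) (hm : 1 ≤ m)
    (B : Fin m → ((Fin n → Bool) → (Fin n → Bool)))
    (hB : ∀ k : Fin m, Function.Bijective (B k))
    (h : ℕ → Fin m) (hh : Computable h)
    (g : ℕ → Bool)
    (hg : ∀ (j : ℕ) (i : Fin n),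
      g (j * n + i) = B (h j) (fun i' : Fin n => φ (j * n + i')) i) :
    ¬ Computable g :=
  dynamic_level_set_incomputable_general φ hφ n m hn B hB h hh g hg
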